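/- arXiv:1408.0143 — 5 statements merged into one kernel-verified Lean document; each statement's English description precedes it below -/
import Mathlib

section
/- Let N be a natural number and let λ = (r,s,t) and λ' = (r',s',t') be locations in Δ_N. Then the distance ∂(λ,λ') in the adjacency graph on Δ_N is equal to the maximum of the three absolute values |r−r'|, |s−s'|, |t−t'|. -/
/-- `Δ_N`: the set of triples of natural numbers with sum `N`. -/
def BA.Delta (N : ℕ) : Set (Fin 3 → ℕ) := {v | v 0 + v 1 + v 2 = N}

/-- Adjacency: `u - v = e_i - e_j` (computed in `ℤ³`) for some `i ≠ j`. -/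
def BA.Adj (u v : Fin 3 → ℕ) : Prop :=
  ∃ i j : Fin 3, i ≠ j ∧ ∀ k, (u k : ℤ) - (v k : ℤ) =
    (if k = i then 1 else 0) - (if k = j then 1 else 0)

/-- A walk of length `n` in `Δ_N` from `u` to `v`. -/
def BA.IsWalk (N n : ℕ) (f : ℕ → Fin 3 → ℕ) (u v : Fin 3 → ℕ) : Prop :=
  f 0 = u ∧ f n = v ∧ (∀ i ≤ n, f i ∈ BA.Delta N) ∧ ∀ i < n, BA.Adj (f i) (f (i + 1))

/-- The graph distance on `Δ_N`: the least length of a walk from `u` to `v`. -/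
noncomputable def BA.dist (N : ℕ) (u v : Fin 3 → ℕ) : ℕ :=
  sInf {n | ∃ f : ℕ → Fin 3 → ℕ, BA.IsWalk N n f u v}

/-!
A step changes each coordinate by at most one, so the distance is at least the largest
coordinate difference. Conversely, the differences `d = λ - λ'` sum to zero, so if `d ≠ 0`
there is a coordinate `i` where `d` is largest (`d i ≥ 1`) and one `j` where it is smallest
(`d j ≤ -1`). Moving a unit from `i` to `j` stays in `Δ_N` and lowers `max |d k|` by one:
with three coordinates the remaining difference is `-(d i + d j)`, and the signs of `d i`
and `d j` keep it within `max |d k| - 1`. Induction on `max |d k|` gives a walk of that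
length.
-/

namespace BA

lemma natAbs_sub_le_one_of_adj {u v : Fin 3 → ℕ} (h : Adj u v) (k : Fin 3) :
    ((u k : ℤ) - v k).natAbs ≤ 1 := by
  obtain ⟨i, j, -, h⟩ := h
  rw [h k]
  split_ifs <;> simp

lemma IsWalk.natAbs_sub_le {N n : ℕ} {f : ℕ → Fin 3 → ℕ} {u v : Fin 3 → ℕ}
    (hf : IsWalk N n f u v) (k : Fin 3) : ((u k : ℤ) - v k).natAbs ≤ n := by
  obtain ⟨rfl, rfl, -, hadj⟩ := hf
  suffices ∀ i ≤ n, ((f 0 k : ℤ) - f i k).natAbs ≤ i from this n le_rfl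
  intro i hi
  induction i with
  | zero => simp
  | succ i ih =>
    have hstep := natAbs_sub_le_one_of_adj (hadj i hi) k
    have := ih (by omega)
    omega

lemma IsWalk.refl {N : ℕ} {u : Fin 3 → ℕ} (hu : u ∈ Delta N) :
    IsWalk N 0 (fun _ => u) u u :=
  ⟨rfl, rfl, fun _ _ => hu, fun _ h => absurd h (Nat.not_lt_zero _)⟩

lemma IsWalk.cons {N n : ℕ} {f : ℕ → Fin 3 → ℕ} {u w v : Fin 3 → ℕ} (hu : u ∈ Delta N)
    (huw : Adj u w) (hf : IsWalk N n f w v) : ∃ g, IsWalk N (n + 1) g u v := by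
  obtain ⟨rfl, rfl, hmem, hadj⟩ := hf
  refine ⟨fun t => Nat.casesOn t u f, rfl, rfl, fun t ht => ?_, fun t ht => ?_⟩
  · cases t with
    | zero => exact hu
    | succ t => exact hmem t (by omega)
  · cases t with
    | zero => exact huw
    | succ t => exact hadj t (by omega)

def move (u : Fin 3 → ℕ) (i j : Fin 3) : Fin 3 → ℕ :=
  fun k => u k + (if k = j then 1 else 0) - (if k = i then 1 else 0)

lemma cast_move {u : Fin 3 → ℕ} {i : Fin 3} (hi : 1 ≤ u i) (j k : Fin 3) :
    (move u i j k : ℤ) = u k - (if k = i then 1 else 0) + (if k = j then 1 else 0) := by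
  unfold move
  split_ifs <;> subst_vars <;> omega

lemma adj_move {u : Fin 3 → ℕ} {i j : Fin 3} (hi : 1 ≤ u i) (hij : i ≠ j) :
    Adj u (move u i j) :=
  ⟨i, j, hij, fun k => by rw [cast_move hi]; ring⟩

lemma move_mem_delta {N : ℕ} {u : Fin 3 → ℕ} {i : Fin 3} (hu : u ∈ Delta N) (hi : 1 ≤ u i)
    (j : Fin 3) : move u i j ∈ Delta N := by
  have key : ∑ k, (move u i j k : ℤ) = ∑ k, (u k : ℤ) := by
    simp only [cast_move hi, Finset.sum_add_distrib, Finset.sum_sub_distrib,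
      Finset.sum_ite_eq', Finset.mem_univ, if_true]
    ring
  simp only [Fin.sum_univ_three] at key
  change u 0 + u 1 + u 2 = N at hu
  change move u i j 0 + move u i j 1 + move u i j 2 = N
  omega

lemma add_add_eq_sum_of_ne (d : Fin 3 → ℤ) {i j k : Fin 3} (hij : i ≠ j) (hik : i ≠ k)
    (hjk : j ≠ k) : d i + d j + d k = ∑ l, d l := by
  have huniv : ({i, j, k} : Finset (Fin 3)) = Finset.univ :=
    Finset.eq_univ_of_card _ (Finset.card_eq_three.mpr ⟨i, j, k, hij, hik, hjk, rfl⟩)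
  rw [← huniv, Finset.sum_insert (by simp [hij, hik]), Finset.sum_pair hjk, add_assoc]

lemma exists_step_natAbs_le {d : Fin 3 → ℤ} (hsum : ∑ k, d k = 0) (hd : d ≠ 0) {m : ℕ}
    (hm : ∀ k, (d k).natAbs ≤ m + 1) :
    ∃ i j, i ≠ j ∧ 1 ≤ d i ∧ d j ≤ -1 ∧
      ∀ k, (d k - (if k = i then 1 else 0) + (if k = j then 1 else 0)).natAbs ≤ m := by
  obtain ⟨i, hi⟩ := Finite.exists_max d
  obtain ⟨j, hj⟩ := Finite.exists_min d
  have hnz : d 0 ≠ 0 ∨ d 1 ≠ 0 ∨ d 2 ≠ 0 := by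
    contrapose! hd
    ext k
    fin_cases k <;> simp [hd]
  have hsum3 := hsum
  rw [Fin.sum_univ_three] at hsum3
  have h0 := hi 0; have h1 := hi 1; have h2 := hi 2
  have h0' := hj 0; have h1' := hj 1; have h2' := hj 2
  have hdi : 1 ≤ d i := by omega
  have hdj : d j ≤ -1 := by omega
  have hij : i ≠ j := by rintro rfl; omega
  refine ⟨i, j, hij, hdi, hdj, fun k => ?_⟩
  have := hm i; have := hm j; have := hm k; have := hi k; have := hj k
  by_cases hki : k = i
  · subst hki; simp only [↓reduceIte, hij]; omega
  by_cases hkj : k = j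
  · subst hkj; simp only [↓reduceIte, hki]; omega
  have := add_add_eq_sum_of_ne d hij (Ne.symm hki) (Ne.symm hkj)
  simp only [hki, hkj, if_false]
  omega

lemma exists_walk_of_natAbs_sub_le {N : ℕ} (m : ℕ) {u v : Fin 3 → ℕ} (hu : u ∈ Delta N)
    (hv : v ∈ Delta N) (huv : ∀ k, ((u k : ℤ) - v k).natAbs ≤ m) :
    ∃ n ≤ m, ∃ f, IsWalk N n f u v := by
  induction m generalizing u with
  | zero =>
    obtain rfl : u = v := funext fun k => by have := huv k; omega
    exact ⟨0, le_rfl, _, IsWalk.refl hu⟩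
  | succ m ih =>
    by_cases heq : u = v
    · subst heq
      exact ⟨0, Nat.zero_le _, _, IsWalk.refl hu⟩
    have hsum : ∑ k, ((u k : ℤ) - v k) = 0 := by
      change u 0 + u 1 + u 2 = N at hu
      change v 0 + v 1 + v 2 = N at hv
      simp only [Fin.sum_univ_three]
      omega
    have hne : (fun k => (u k : ℤ) - v k) ≠ 0 := fun h =>
      heq (funext fun k => by have := congrFun h k; simp only [Pi.zero_apply] at this; omega)
    obtain ⟨i, j, hij, hi, -, hstep⟩ := exists_step_natAbs_le hsum hne huv
    have hui : 1 ≤ u i := by omega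
    obtain ⟨n, hn, f, hf⟩ := ih (move_mem_delta hu hui j) fun k => by
      rw [cast_move hui]
      convert hstep k using 2
      ring
    obtain ⟨g, hg⟩ := hf.cons hu (adj_move hui hij)
    exact ⟨n + 1, by omega, g, hg⟩

end BA

/-- The distance between two locations of `Δ_N` equals the maximum of the
absolute values of the coordinatewise differences. -/
theorem stmt0 (N : ℕ) (l l' : Fin 3 → ℕ)
    (hl : l ∈ BA.Delta N) (hl' : l' ∈ BA.Delta N) :
    BA.dist N l l' =
      max (max ((l 0 : ℤ) - (l' 0 : ℤ)).natAbs ((l 1 : ℤ) - (l' 1 : ℤ)).natAbs)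
        ((l 2 : ℤ) - (l' 2 : ℤ)).natAbs := by
  set D := max (max ((l 0 : ℤ) - (l' 0 : ℤ)).natAbs ((l 1 : ℤ) - (l' 1 : ℤ)).natAbs)
    ((l 2 : ℤ) - (l' 2 : ℤ)).natAbs
  have hD : ∀ k, ((l k : ℤ) - l' k).natAbs ≤ D := by
    intro k
    fin_cases k <;> simp [D]
  obtain ⟨n, hn, f, hf⟩ := BA.exists_walk_of_natAbs_sub_le D hl hl' hD
  unfold BA.dist
  refine le_antisymm ?_ (le_csInf ⟨n, f, hf⟩ ?_)
  · exact le_trans (Nat.sInf_le ⟨f, hf⟩) hn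
  rintro n ⟨g, hg⟩
  exact max_le (max_le (hg.natAbs_sub_le 0) (hg.natAbs_sub_le 1)) (hg.natAbs_sub_le 2)
end

section
/- Let N be a natural number and let λ = (r,s,t) and λ' = (r',s',t') be locations in Δ_N. Then the number of geodesic paths in Δ_N from λ to λ' is equal to the binomial coefficient C(d_1+d_2, d_1), where d_1 ≤ d_2 ≤ d_3 is an ordering of the three quantities |r−r'|, |s−s'|, |t−t'|. -/
/-- The set of geodesic paths in `Δ_N` from `u` to `v`: sequences of length
`∂(u,v)` with consecutive entries adjacent, no immediate backtracking,
all entries in `Δ_N`, starting at `u` and ending at `v`. -/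
def BA.geodesics (N : ℕ) (u v : Fin 3 → ℕ) :
    Set (Fin (BA.dist N u v + 1) → Fin 3 → ℕ) :=
  {f | f 0 = u ∧ f (Fin.last (BA.dist N u v)) = v ∧ (∀ i, f i ∈ BA.Delta N) ∧
    (∀ i : ℕ, ∀ _ : i + 1 ≤ BA.dist N u v,
      BA.Adj (f ⟨i, by omega⟩) (f ⟨i + 1, by omega⟩)) ∧
    (∀ i : ℕ, ∀ _ : i + 2 ≤ BA.dist N u v, f ⟨i, by omega⟩ ≠ f ⟨i + 2, by omega⟩)}

/-!
Write `δ = λ - λ'`. Since `δ` sums to zero, some coordinate `i` satisfies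
`|δ i| = |δ j| + |δ k| = d₃`, and since a step changes each coordinate by at most one, every
walk from `λ` to `λ'` has length at least `d₃`. Orient the pair so that coordinate `i`
decreases (geodesics from `λ'` to `λ` are the reversed ones). A path of length `d₃` then
moves a unit out of coordinate `i` at every step, into `j` or into `k`, so it is determined by the
set of steps that feed `j`, which has `|δ j|` elements; conversely every such set yields a path.
Such a path exists, so `∂(λ, λ') = d₃` and there are `C(|δ j| + |δ k|, |δ j|) = C(d₁ + d₂, d₁)`
geodesics.
-/

open Finset

lemma Fin.eq_or_eq_or_eq_of_ne {i j k : Fin 3} (hij : i ≠ j) (hik : i ≠ k) (hjk : j ≠ k)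
    (c : Fin 3) : c = i ∨ c = j ∨ c = k := by
  omega

lemma Fin.add_add_eq_of_ne {M : Type*} [AddCommMonoid M] {i j k : Fin 3} (hij : i ≠ j)
    (hik : i ≠ k) (hjk : j ≠ k) (w : Fin 3 → M) : w i + w j + w k = w 0 + w 1 + w 2 := by
  fin_cases i <;> fin_cases j <;> fin_cases k <;> simp_all <;> abel

lemma Finset.card_inter_range_succ (S : Finset ℕ) (m : ℕ) :
    #(S ∩ range (m + 1)) = #(S ∩ range m) + if m ∈ S then 1 else 0 := by
  rw [range_add_one]
  split_ifs with hm
  · rw [inter_insert_of_mem hm, card_insert_of_notMem (by simp)]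
  · rw [inter_insert_of_notMem hm, add_zero]

lemma Finset.card_inter_range_le (S : Finset ℕ) (m : ℕ) : #(S ∩ range m) ≤ m :=
  (card_le_card inter_subset_right).trans (card_range m).le

namespace BA

lemma Adj.symm {u v : Fin 3 → ℕ} (h : Adj u v) : Adj v u := by
  obtain ⟨i, j, hij, hd⟩ := h
  refine ⟨j, i, hij.symm, fun c => ?_⟩
  have := hd c
  split_ifs at this ⊢ <;> omega

lemma Adj.abs_sub_le_one {u v : Fin 3 → ℕ} (h : Adj u v) (c : Fin 3) :
    |(u c : ℤ) - v c| ≤ 1 := by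
  obtain ⟨i, j, -, hd⟩ := h
  have := hd c
  rw [abs_le]
  split_ifs at this <;> omega

lemma IsWalk.abs_sub_le {N n : ℕ} {f : ℕ → Fin 3 → ℕ} {u v : Fin 3 → ℕ}
    (hf : IsWalk N n f u v) {m m' : ℕ} (hmm' : m ≤ m') (hm' : m' ≤ n) (c : Fin 3) :
    |(f m c : ℤ) - f m' c| ≤ m' - m := by
  induction m', hmm' using Nat.le_induction with
  | base => simp
  | succ m' hmm' ih =>
    have hstep := (hf.2.2.2 m' (by omega)).abs_sub_le_one c
    calc |(f m c : ℤ) - f (m' + 1) c|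
        ≤ |(f m c : ℤ) - f m' c| + |(f m' c : ℤ) - f (m' + 1) c| := _root_.abs_sub_le _ _ _
      _ ≤ (m' - m) + 1 := add_le_add (ih (by omega)) hstep
      _ = ((m' + 1 : ℕ) : ℤ) - m := by push_cast; ring

lemma IsWalk.apply_add_eq {N n : ℕ} {f : ℕ → Fin 3 → ℕ} {u v : Fin 3 → ℕ}
    (hf : IsWalk N n f u v) {i : Fin 3} (hi : u i = v i + n) {m : ℕ} (hm : m ≤ n) :
    f m i + m = u i := by
  have h0 := abs_le.mp (hf.abs_sub_le (Nat.zero_le m) hm i)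
  have h1 := abs_le.mp (hf.abs_sub_le hm le_rfl i)
  rw [hf.1] at h0
  rw [hf.2.1] at h1
  push_cast at h0 h1
  omega

lemma dist_eq_of_isWalk {N n : ℕ} {f : ℕ → Fin 3 → ℕ} {u v : Fin 3 → ℕ}
    (hf : IsWalk N n f u v) {c : Fin 3} (hc : ((u c : ℤ) - v c).natAbs = n) :
    dist N u v = n := by
  refine le_antisymm (Nat.sInf_le ⟨f, hf⟩) ?_
  obtain ⟨g, hg⟩ := Nat.sInf_mem (⟨n, f, hf⟩ : {n | ∃ f, IsWalk N n f u v}.Nonempty)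
  have := hg.abs_sub_le (Nat.zero_le _) le_rfl c
  rw [hg.1, hg.2.1, Int.abs_eq_natAbs, hc, Nat.cast_zero, sub_zero] at this
  exact_mod_cast this

def paths (N n : ℕ) (u v : Fin 3 → ℕ) : Set (Fin (n + 1) → Fin 3 → ℕ) :=
  {f | f 0 = u ∧ f (Fin.last n) = v ∧ (∀ i, f i ∈ Delta N) ∧
    (∀ i : ℕ, ∀ _ : i + 1 ≤ n, Adj (f ⟨i, by omega⟩) (f ⟨i + 1, by omega⟩)) ∧
    (∀ i : ℕ, ∀ _ : i + 2 ≤ n, f ⟨i, by omega⟩ ≠ f ⟨i + 2, by omega⟩)}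

lemma geodesics_eq_paths (N : ℕ) (u v : Fin 3 → ℕ) :
    geodesics N u v = paths N (dist N u v) u v := rfl

lemma isWalk_of_mem_paths {N n : ℕ} {u v : Fin 3 → ℕ} {f : Fin (n + 1) → Fin 3 → ℕ}
    (hf : f ∈ paths N n u v) : IsWalk N n (fun m => f ⟨min m n, by omega⟩) u v := by
  obtain ⟨h0, hn, hmem, hadj, -⟩ := hf
  refine ⟨by simpa using h0, by simp only [min_self]; exact hn, fun m _ => hmem _, fun m hm => ?_⟩
  simpa [Nat.min_eq_left hm.le, Nat.min_eq_left (Nat.succ_le_of_lt hm)] using hadj m hm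

lemma mem_paths_of_isWalk {N n : ℕ} {u v : Fin 3 → ℕ} {f : ℕ → Fin 3 → ℕ}
    (hf : IsWalk N n f u v) (hback : ∀ m, m + 2 ≤ n → f m ≠ f (m + 2)) :
    (fun m : Fin (n + 1) => f m) ∈ paths N n u v :=
  ⟨hf.1, hf.2.1, fun m => hf.2.2.1 m (Nat.lt_succ_iff.mp m.isLt),
    fun m hm => hf.2.2.2 m hm, hback⟩

lemma rev_mem_paths {N n : ℕ} {u v : Fin 3 → ℕ} {f : Fin (n + 1) → Fin 3 → ℕ}
    (hf : f ∈ paths N n u v) : (fun m => f m.rev) ∈ paths N n v u := by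
  obtain ⟨h0, hn, hmem, hadj, hback⟩ := hf
  have hrev : ∀ m (hm : m ≤ n), (⟨m, by omega⟩ : Fin (n + 1)).rev = ⟨n - m, by omega⟩ := by
    intro m hm
    ext
    simp only [Fin.val_rev]
    omega
  refine ⟨by simpa using hn, by simpa using h0, fun m => hmem _, fun m hm => ?_, fun m hm => ?_⟩
  · have := (hadj (n - (m + 1)) (by omega)).symm
    simp only [hrev m (by omega), hrev (m + 1) hm]
    convert this using 3
    omega
  · have := (hback (n - (m + 2)) (by omega)).symm
    simp only [hrev m (by omega), hrev (m + 2) hm]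
    convert this using 3
    omega

lemma ncard_paths_comm (N n : ℕ) (u v : Fin 3 → ℕ) :
    (paths N n u v).ncard = (paths N n v u).ncard :=
  Set.ncard_congr (fun f _ m => f m.rev) (fun _ hf => rev_mem_paths hf)
    (fun f g _ _ hfg => funext fun m => by simpa using congrFun hfg m.rev)
    (fun g hg => ⟨fun m => g m.rev, rev_mem_paths hg, by simp⟩)

lemma Adj.eq_add_one_or_eq_add_one {x y : Fin 3 → ℕ} (h : Adj x y) {i j k : Fin 3}
    (hij : i ≠ j) (hik : i ≠ k) (hjk : j ≠ k) (hi : x i = y i + 1) :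
    (y j = x j + 1 ∧ y k = x k) ∨ (y j = x j ∧ y k = x k + 1) := by
  obtain ⟨p, q, hpq, hd⟩ := h
  have hdi := hd i
  have hdj := hd j
  have hdk := hd k
  split_ifs at hdi hdj hdk <;> omega

/-- At step `t` the path moves a unit out of coordinate `i`, into `j` if `t ∈ S` and into `k`
otherwise. -/
def stair (u : Fin 3 → ℕ) (i j k : Fin 3) (S : Finset ℕ) (m : ℕ) : Fin 3 → ℕ := fun c =>
  if c = i then u i - m
  else if c = j then u j + #(S ∩ range m)
  else u k + (m - #(S ∩ range m))

section Stair

variable {N a b : ℕ} {u v : Fin 3 → ℕ} {i j k : Fin 3} {S : Finset ℕ}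

lemma stair_zero (hij : i ≠ j) (hik : i ≠ k) (hjk : j ≠ k) : stair u i j k S 0 = u := by
  funext c
  rcases Fin.eq_or_eq_or_eq_of_ne hij hik hjk c with rfl | rfl | rfl <;>
    simp [stair, hij, hik, hjk, Ne.symm]

lemma isWalk_stair (hij : i ≠ j) (hik : i ≠ k) (hjk : j ≠ k) (hu : u ∈ Delta N)
    (hui : u i = v i + (a + b)) (hvj : v j = u j + a) (hvk : v k = u k + b)
    (hS : S ∈ (range (a + b)).powersetCard a) :
    IsWalk N (a + b) (stair u i j k S) u v := by
  rw [mem_powersetCard] at hS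
  have hSn : S ∩ range (a + b) = S := inter_eq_left.mpr hS.1
  refine ⟨?_, ?_, fun m hm => ?_, fun m hm => ?_⟩
  · exact stair_zero hij hik hjk
  · funext c
    rcases Fin.eq_or_eq_or_eq_of_ne hij hik hjk c with rfl | rfl | rfl <;>
      simp [stair, hSn, hS.2, hij, hik, hjk, Ne.symm] <;> omega
  · have hu' : u i + u j + u k = N := (Fin.add_add_eq_of_ne hij hik hjk u).trans hu
    have := card_inter_range_le S m
    show _ = N
    rw [← Fin.add_add_eq_of_ne hij hik hjk]
    simp only [stair, if_pos, if_neg (Ne.symm hij), if_neg (Ne.symm hik), if_neg (Ne.symm hjk)]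
    omega
  · have hcard := card_inter_range_succ S m
    have := card_inter_range_le S m
    refine ⟨i, if m ∈ S then j else k, by split_ifs <;> assumption, fun c => ?_⟩
    rcases Fin.eq_or_eq_or_eq_of_ne hij hik hjk c with rfl | rfl | rfl <;>
      by_cases hmS : m ∈ S <;>
      simp [stair, hmS, hcard, Ne.symm hij, Ne.symm hik, Ne.symm hjk, hij, hik, hjk] <;> omega

lemma stair_apply_ne (hui : u i = v i + (a + b)) {m : ℕ} (hm : m + 2 ≤ a + b) :
    stair u i j k S m ≠ stair u i j k S (m + 2) := fun h => by
  have := congrFun h i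
  simp only [stair, if_pos] at this
  omega

lemma eq_stair_of_isWalk {F : ℕ → Fin 3 → ℕ} (hF : IsWalk N (a + b) F u v)
    (hij : i ≠ j) (hik : i ≠ k) (hjk : j ≠ k)
    (hui : u i = v i + (a + b)) (hvj : v j = u j + a) :
    ∃ S ∈ (range (a + b)).powersetCard a, ∀ m ≤ a + b, F m = stair u i j k S m := by
  have hFi : ∀ m ≤ a + b, F m i + m = u i := fun m hm => hF.apply_add_eq hui hm
  set S := (range (a + b)).filter fun t => F (t + 1) j = F t j + 1
  have hSsub : S ⊆ range (a + b) := filter_subset _ _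
  have hstep : ∀ m < a + b, (m ∈ S ∧ F (m + 1) j = F m j + 1 ∧ F (m + 1) k = F m k) ∨
      (m ∉ S ∧ F (m + 1) j = F m j ∧ F (m + 1) k = F m k + 1) := by
    intro m hm
    have hi : F m i = F (m + 1) i + 1 := by
      have := hFi m hm.le
      have := hFi (m + 1) hm
      omega
    rcases (hF.2.2.2 m hm).eq_add_one_or_eq_add_one hij hik hjk hi with h | h
    · exact Or.inl ⟨by simp [S, hm, h.1], h⟩
    · exact Or.inr ⟨by simp [S, h.1], h⟩
  have hFS : ∀ m ≤ a + b, F m = stair u i j k S m := by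
    intro m hm
    induction m with
    | zero => rw [hF.1, stair_zero hij hik hjk]
    | succ m ih =>
      have hFm := ih (by omega)
      have hj : F m j = u j + #(S ∩ range m) := by rw [hFm]; simp [stair, Ne.symm hij]
      have hk : F m k = u k + (m - #(S ∩ range m)) := by
        rw [hFm]; simp [stair, Ne.symm hik, Ne.symm hjk]
      have hcard := card_inter_range_succ S m
      have := card_inter_range_le S m
      have := hFi (m + 1) hm
      funext c
      rcases hstep m hm with ⟨hmS, h1, h2⟩ | ⟨hmS, h1, h2⟩ <;>
        simp only [hmS, if_true, if_false] at hcard <;>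
        rcases Fin.eq_or_eq_or_eq_of_ne hij hik hjk c with rfl | rfl | rfl <;>
        simp only [stair, if_pos, if_neg (Ne.symm hij), if_neg (Ne.symm hik),
          if_neg (Ne.symm hjk)] <;> omega
  refine ⟨S, mem_powersetCard.mpr ⟨hSsub, ?_⟩, hFS⟩
  have := congrFun (hFS (a + b) le_rfl) j
  rw [hF.2.1, stair, if_neg (Ne.symm hij), if_pos rfl, inter_eq_left.mpr hSsub] at this
  omega

lemma stair_injOn (hij : i ≠ j) (n : ℕ) :
    Set.InjOn (fun S (m : Fin (n + 1)) => stair u i j k S m) ((range n).powerset : Set _) := by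
  intro S hS T hT hST
  ext t
  by_cases ht : t < n
  · have h0 := congrFun (congrFun hST ⟨t, by omega⟩) j
    have h1 := congrFun (congrFun hST ⟨t + 1, by omega⟩) j
    simp only [stair, if_neg (Ne.symm hij), if_pos] at h0 h1
    rw [card_inter_range_succ, card_inter_range_succ] at h1
    split_ifs at h1 <;> simp_all
  · have hS' : t ∉ S := fun h => ht (mem_range.mp (mem_powerset.mp hS h))
    have hT' : t ∉ T := fun h => ht (mem_range.mp (mem_powerset.mp hT h))
    simp [hS', hT']

lemma paths_eq_image_stair (hij : i ≠ j) (hik : i ≠ k) (hjk : j ≠ k) (hu : u ∈ Delta N)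
    (hui : u i = v i + (a + b)) (hvj : v j = u j + a) (hvk : v k = u k + b) :
    paths N (a + b) u v = (fun S (m : Fin (a + b + 1)) => stair u i j k S m) ''
      ((range (a + b)).powersetCard a : Set _) := by
  ext f
  constructor
  · intro hf
    obtain ⟨S, hS, hfS⟩ := eq_stair_of_isWalk (isWalk_of_mem_paths hf) hij hik hjk hui hvj
    refine ⟨S, hS, funext fun m => ?_⟩
    simpa [Nat.min_eq_left (Nat.lt_succ_iff.mp m.isLt)] using (hfS m (by omega)).symm
  · rintro ⟨S, hS, rfl⟩
    exact mem_paths_of_isWalk (isWalk_stair hij hik hjk hu hui hvj hvk hS)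
      fun m hm => stair_apply_ne hui hm

lemma ncard_paths (hij : i ≠ j) (hik : i ≠ k) (hjk : j ≠ k) (hu : u ∈ Delta N)
    (hui : u i = v i + (a + b)) (hvj : v j = u j + a) (hvk : v k = u k + b) :
    (paths N (a + b) u v).ncard = (a + b).choose a := by
  rw [paths_eq_image_stair hij hik hjk hu hui hvj hvk,
    ((stair_injOn hij _).mono fun S hS => ?_).ncard_image,
    Set.ncard_coe_finset, card_powersetCard, card_range]
  exact mem_powerset.mpr (mem_powersetCard.mp hS).1

lemma ncard_geodesics_of_eq_add (hij : i ≠ j) (hik : i ≠ k) (hjk : j ≠ k) (hu : u ∈ Delta N)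
    (hui : u i = v i + (a + b)) (hvj : v j = u j + a) (hvk : v k = u k + b) :
    (geodesics N u v).ncard = (a + b).choose a ∧ (geodesics N v u).ncard = (a + b).choose a := by
  obtain ⟨f, hf⟩ : (paths N (a + b) u v).Nonempty := by
    rw [paths_eq_image_stair hij hik hjk hu hui hvj hvk]
    exact (coe_nonempty.mpr (powersetCard_nonempty.mpr (by simp))).image _
  have huv : dist N u v = a + b := dist_eq_of_isWalk (isWalk_of_mem_paths hf) (c := i) (by omega)
  have hvu : dist N v u = a + b :=
    dist_eq_of_isWalk (isWalk_of_mem_paths (rev_mem_paths hf)) (c := i) (by omega)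
  rw [geodesics_eq_paths, geodesics_eq_paths, huv, hvu, ncard_paths_comm N _ v u,
    ncard_paths hij hik hjk hu hui hvj hvk]
  exact ⟨rfl, rfl⟩

end Stair

lemma ncard_geodesics_of_natAbs_eq_add {N : ℕ} {u v : Fin 3 → ℕ} (hu : u ∈ Delta N)
    (hv : v ∈ Delta N) {i j k : Fin 3} (hij : i ≠ j) (hik : i ≠ k) (hjk : j ≠ k)
    (h : ((u i : ℤ) - v i).natAbs = ((u j : ℤ) - v j).natAbs + ((u k : ℤ) - v k).natAbs) :
    (geodesics N u v).ncard =
      (((u j : ℤ) - v j).natAbs + ((u k : ℤ) - v k).natAbs).choose ((u j : ℤ) - v j).natAbs := by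
  have hsum : u i + u j + u k = v i + v j + v k := by
    rw [Fin.add_add_eq_of_ne hij hik hjk u, Fin.add_add_eq_of_ne hij hik hjk v]
    exact (hu : _ = N).trans hv.symm
  rcases le_total (v i) (u i) with hi | hi
  · exact (ncard_geodesics_of_eq_add hij hik hjk hu (by omega) (by omega) (by omega)).1
  · exact (ncard_geodesics_of_eq_add hij hik hjk hv (by omega) (by omega) (by omega)).2

end BA

lemma Nat.choose_eq_of_multiset_eq {d₁ d₂ d₃ x y z : ℕ}
    (h : ({d₁, d₂, d₃} : Multiset ℕ) = {x, y, z}) (h12 : d₁ ≤ d₂) (h23 : d₂ ≤ d₃)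
    (hx : x = y + z) : (d₁ + d₂).choose d₁ = (y + z).choose y := by
  have hd : ∀ d ∈ ({d₁, d₂, d₃} : Multiset ℕ), d = x ∨ d = y ∨ d = z := fun d hd => by
    rw [h] at hd; simpa using hd
  have hx' : ∀ e ∈ ({x, y, z} : Multiset ℕ), e = d₁ ∨ e = d₂ ∨ e = d₃ := fun e he => by
    rw [← h] at he; simpa using he
  have hs := congrArg Multiset.sum h
  simp only [Multiset.insert_eq_cons, Multiset.sum_cons, Multiset.sum_singleton] at hs
  have := hd d₁ (by simp)
  have := hd d₂ (by simp)
  have := hd d₃ (by simp)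
  have := hx' x (by simp)
  have := hx' y (by simp)
  have := hx' z (by simp)
  obtain ⟨rfl, rfl⟩ | ⟨rfl, rfl⟩ : (d₁ = y ∧ d₂ = z) ∨ (d₁ = z ∧ d₂ = y) := by omega
  · rfl
  · rw [Nat.add_comm, Nat.choose_symm_add]

/-- The number of geodesic paths in `Δ_N` from `λ` to `λ'` equals the binomial
coefficient `C(d₁+d₂, d₁)`, where `d₁ ≤ d₂ ≤ d₃` is an ordering of the three
quantities `|r-r'|, |s-s'|, |t-t'|`. -/
theorem stmt3 (N : ℕ) (l l' : Fin 3 → ℕ)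
    (hl : l ∈ BA.Delta N) (hl' : l' ∈ BA.Delta N)
    (d₁ d₂ d₃ : ℕ)
    (hperm : ({d₁, d₂, d₃} : Multiset ℕ) =
      {((l 0 : ℤ) - (l' 0 : ℤ)).natAbs, ((l 1 : ℤ) - (l' 1 : ℤ)).natAbs,
        ((l 2 : ℤ) - (l' 2 : ℤ)).natAbs})
    (h12 : d₁ ≤ d₂) (h23 : d₂ ≤ d₃) :
    (BA.geodesics N l l').ncard = (d₁ + d₂).choose d₁ := by
  have hsum : l 0 + l 1 + l 2 = l' 0 + l' 1 + l' 2 := (hl : _ = N).trans hl'.symm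
  set x₀ := ((l 0 : ℤ) - (l' 0 : ℤ)).natAbs
  set x₁ := ((l 1 : ℤ) - (l' 1 : ℤ)).natAbs
  set x₂ := ((l 2 : ℤ) - (l' 2 : ℤ)).natAbs
  rcases (by omega : x₀ = x₁ + x₂ ∨ x₁ = x₀ + x₂ ∨ x₂ = x₀ + x₁) with h | h | h
  · rw [BA.ncard_geodesics_of_natAbs_eq_add hl hl' (by decide : (0 : Fin 3) ≠ 1) (by decide)
      (by decide) h, Nat.choose_eq_of_multiset_eq hperm h12 h23 h]
  · rw [BA.ncard_geodesics_of_natAbs_eq_add hl hl' (by decide : (1 : Fin 3) ≠ 0) (by decide)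
      (by decide : (0 : Fin 3) ≠ 2) h,
      Nat.choose_eq_of_multiset_eq (hperm.trans (Multiset.cons_swap _ _ _)) h12 h23 h]
  · rw [BA.ncard_geodesics_of_natAbs_eq_add hl hl' (by decide : (2 : Fin 3) ≠ 0) (by decide)
      (by decide : (0 : Fin 3) ≠ 1) h, Nat.choose_eq_of_multiset_eq (hperm.trans ?_) h12 h23 h]
    show x₀ ::ₘ x₁ ::ₘ x₂ ::ₘ 0 = x₂ ::ₘ x₀ ::ₘ x₁ ::ₘ 0
    rw [Multiset.cons_swap x₁ x₂, Multiset.cons_swap x₀ x₂]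
end

section
/- Let F be a field, N a natural number, and V an (N+1)-dimensional vector space over F. Let {U_i}_{i=0}^N, {U'_i}_{i=0}^N, {U''_i}_{i=0}^N be flags on V. Then the following are equivalent: (i) the three flags are totally opposite; (ii) for every 0 ≤ n ≤ N, the three sequences {U_i}_{i=0}^{N−n}, {U_{N−n} ∩ U'_{n+i}}_{i=0}^{N−n}, and {U_{N−n} ∩ U''_{n+i}}_{i=0}^{N−n} are flags on the subspace U_{N−n} (each consisting of nested subspaces of U_{N−n} of dimensions 1, 2, …, N−n+1) that are mutually opposite, meaning that for any two of the three sequences, say {W_i} and {W'_i}, one has W_i ∩ W'_j = 0 whenever i + j < N − n. -/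
/-- A flag on `V` (of diameter `N`): nested subspaces `U_0 ⊆ ⋯ ⊆ U_N` with
`dim U_i = i + 1`. -/
def BA.IsFlag {F V : Type*} [Field F] [AddCommGroup V] [Module F V]
    (N : ℕ) (U : ℕ → Submodule F V) : Prop :=
  (∀ i ≤ N, Module.finrank F (U i) = i + 1) ∧ ∀ i, i + 1 ≤ N → U i ≤ U (i + 1)

/-- Two flags are opposite whenever `U_i ∩ U'_j = 0` for `i + j < N`. -/
def BA.Opposite {F V : Type*} [Field F] [AddCommGroup V] [Module F V]
    (N : ℕ) (U U' : ℕ → Submodule F V) : Prop :=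
  ∀ i j : ℕ, i ≤ N → j ≤ N → i + j < N → U i ⊓ U' j = ⊥

/-- Three flags are totally opposite whenever
`U_{N-r} ∩ U'_{N-s} ∩ U''_{N-t} = 0` for all `r,s,t ≤ N` with `r+s+t > N`. -/
def BA.TotallyOpposite {F V : Type*} [Field F] [AddCommGroup V] [Module F V]
    (N : ℕ) (U U' U'' : ℕ → Submodule F V) : Prop :=
  ∀ r s t : ℕ, r ≤ N → s ≤ N → t ≤ N → N < r + s + t →
    U (N - r) ⊓ U' (N - s) ⊓ U'' (N - t) = ⊥

/-- `A` is a flag (of diameter `m`) on the subspace `W`: nested subspaces of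
`W` of dimensions `1, 2, …, m+1`. -/
def BA.IsFlagOn {F V : Type*} [Field F] [AddCommGroup V] [Module F V]
    (m : ℕ) (W : Submodule F V) (A : ℕ → Submodule F V) : Prop :=
  (∀ i ≤ m, Module.finrank F (A i) = i + 1 ∧ A i ≤ W) ∧
    ∀ i, i + 1 ≤ m → A i ≤ A (i + 1)

/-!
Totally opposite flags restrict to pairwise opposite flags: taking `t = 0` (where `U''_N = V`)
in the defining condition shows that any two of the three flags are opposite, and two opposite
flags meet in the expected dimension, `dim (U_{N-n} ∩ U'_{n+i}) = i + 1`, by the dimension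
formula from below and by the disjointness of `U_{N-n} ∩ U'_{n+i}` and `U'_{n-1}` inside
`U'_{n+i}` from above. Conversely, a triple intersection `U_{N-r} ∩ U'_{N-s} ∩ U''_{N-t}` with
`r + s + t > N` vanishes by pairwise opposition when `r + s > N` or `r + t > N`, and otherwise
it is the intersection of the `(N-r-s)`-th and `(N-r-t)`-th members of the two flags induced
on `U_{N-r}`, which are opposite.
-/

theorem Submodule.finrank_add_finrank_le_of_disjoint_of_le {K V : Type*} [DivisionRing K]
    [AddCommGroup V] [Module K V] [FiniteDimensional K V] {W X Y : Submodule K V}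
    (hWX : Disjoint W X) (hW : W ≤ Y) (hX : X ≤ Y) :
    Module.finrank K W + Module.finrank K X ≤ Module.finrank K Y := by
  rw [← Submodule.finrank_sup_add_finrank_inf_eq W X, hWX.eq_bot, finrank_bot, add_zero]
  exact Submodule.finrank_mono (sup_le hW hX)

namespace BA

variable {F V : Type*} [Field F] [AddCommGroup V] [Module F V] {N : ℕ}
  {U U' U'' : ℕ → Submodule F V}

theorem IsFlag.mono (hU : IsFlag N U) {a b : ℕ} (hab : a ≤ b) (hb : b ≤ N) : U a ≤ U b := by
  induction b, hab using Nat.le_induction with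
  | base => exact le_rfl
  | succ k hak ih => exact (ih (by omega)).trans (hU.2 k hb)

theorem IsFlag.eq_top (hV : Module.finrank F V = N + 1) (hU : IsFlag N U) : U N = ⊤ :=
  have : FiniteDimensional F V := Module.finite_of_finrank_eq_succ hV
  Submodule.eq_top_of_finrank_eq (by rw [hU.1 N le_rfl, hV])

theorem IsFlag.isFlagOn (hU : IsFlag N U) {m : ℕ} (hm : m ≤ N) : IsFlagOn m (U m) U :=
  ⟨fun i hi => ⟨hU.1 i (by omega), hU.mono hi hm⟩, fun i hi => hU.2 i (by omega)⟩

theorem Opposite.finrank_inf (hV : Module.finrank F V = N + 1) (hU : IsFlag N U)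
    (hU' : IsFlag N U') (h : Opposite N U U') {n i : ℕ} (hn : n ≤ N) (hi : i ≤ N - n) :
    Module.finrank F ↥(U (N - n) ⊓ U' (n + i)) = i + 1 := by
  have : FiniteDimensional F V := Module.finite_of_finrank_eq_succ hV
  have hdimU : Module.finrank F (U (N - n)) = N - n + 1 := hU.1 _ (by omega)
  have hdimU' : Module.finrank F (U' (n + i)) = n + i + 1 := hU'.1 _ (by omega)
  have hlower : i + 1 ≤ Module.finrank F ↥(U (N - n) ⊓ U' (n + i)) := by
    have hsup := Submodule.finrank_sup_add_finrank_inf_eq (U (N - n)) (U' (n + i))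
    have := Submodule.finrank_le (U (N - n) ⊔ U' (n + i))
    omega
  have hupper : Module.finrank F ↥(U (N - n) ⊓ U' (n + i)) ≤ i + 1 := by
    rcases n with _ | m
    · have := Submodule.finrank_mono (inf_le_right : U (N - 0) ⊓ U' (0 + i) ≤ U' (0 + i))
      omega
    · have hdisj : Disjoint (U (N - (m + 1)) ⊓ U' (m + 1 + i)) (U' m) :=
        disjoint_iff.mpr <| eq_bot_mono (inf_le_inf_right _ inf_le_left)
          (h (N - (m + 1)) m (by omega) (by omega) (by omega))
      have := Submodule.finrank_add_finrank_le_of_disjoint_of_le hdisj inf_le_right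
        (hU'.mono (by omega : m ≤ m + 1 + i) (by omega))
      have hdim_m : Module.finrank F (U' m) = m + 1 := hU'.1 m (by omega)
      omega
  omega

theorem Opposite.isFlagOn_inf (hV : Module.finrank F V = N + 1) (hU : IsFlag N U)
    (hU' : IsFlag N U') (h : Opposite N U U') {n : ℕ} (hn : n ≤ N) :
    IsFlagOn (N - n) (U (N - n)) (fun i => U (N - n) ⊓ U' (n + i)) :=
  ⟨fun _ hi => ⟨h.finrank_inf hV hU hU' hn hi, inf_le_left⟩,
    fun i hi => inf_le_inf_left _ (hU'.2 (n + i) (by omega))⟩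

theorem Opposite.inf_right (h : Opposite N U U') (n : ℕ) :
    Opposite (N - n) U (fun i => U (N - n) ⊓ U' (n + i)) := fun i j hi hj hij =>
  eq_bot_mono (inf_le_inf_left _ inf_le_right) (h i (n + j) (by omega) (by omega) (by omega))

theorem TotallyOpposite.opposite_of_eq_top (h : TotallyOpposite N U U' U'') (h'' : U'' N = ⊤) :
    Opposite N U U' := by
  intro i j hi hj hij
  have := h (N - i) (N - j) 0 (by omega) (by omega) (by omega) (by omega)
  rwa [Nat.sub_sub_self hi, Nat.sub_sub_self hj, Nat.sub_zero, h'', inf_top_eq] at this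

theorem TotallyOpposite.swap (h : TotallyOpposite N U U' U'') : TotallyOpposite N U U'' U' :=
  fun r s t hr hs ht hrst => by
    rw [inf_right_comm]
    exact h r t s hr ht hs (by omega)

theorem TotallyOpposite.opposite_inf (h : TotallyOpposite N U U' U'') {n : ℕ} (hn : n ≤ N) :
    Opposite (N - n) (fun i => U (N - n) ⊓ U' (n + i)) (fun i => U (N - n) ⊓ U'' (n + i)) := by
  intro i j hi hj hij
  have := h n (N - n - i) (N - n - j) hn (by omega) (by omega) (by omega)
  rwa [show N - (N - n - i) = n + i by omega, show N - (N - n - j) = n + j by omega,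
    inf_assoc, inf_inf_distrib_left] at this

theorem totallyOpposite_of_opposite (h₁₂ : Opposite N U U') (h₁₃ : Opposite N U U'')
    (h₂₃ : ∀ n ≤ N, Opposite (N - n) (fun i => U (N - n) ⊓ U' (n + i))
      (fun i => U (N - n) ⊓ U'' (n + i))) :
    TotallyOpposite N U U' U'' := by
  intro r s t hr hs ht hrst
  by_cases hrs : N < r + s
  · exact eq_bot_mono inf_le_left (h₁₂ _ _ (by omega) (by omega) (by omega))
  by_cases hrt : N < r + t
  · exact eq_bot_mono (inf_le_inf_right _ inf_le_left) (h₁₃ _ _ (by omega) (by omega) (by omega))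
  have := h₂₃ r hr (N - r - s) (N - r - t) (by omega) (by omega) (by omega)
  dsimp only at this
  rwa [show r + (N - r - s) = N - s by omega, show r + (N - r - t) = N - t by omega,
    ← inf_inf_distrib_left, ← inf_assoc] at this

end BA

/-- Three flags on `V` are totally opposite iff for every `0 ≤ n ≤ N` the
three sequences `{U_i}`, `{U_{N-n} ∩ U'_{n+i}}`, `{U_{N-n} ∩ U''_{n+i}}`
(for `0 ≤ i ≤ N-n`) are mutually opposite flags on `U_{N-n}`. -/
theorem stmt9 {F V : Type*} [Field F] [AddCommGroup V] [Module F V] (N : ℕ)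
    (hV : Module.finrank F V = N + 1) (U U' U'' : ℕ → Submodule F V)
    (hU : BA.IsFlag N U) (hU' : BA.IsFlag N U') (hU'' : BA.IsFlag N U'') :
    BA.TotallyOpposite N U U' U'' ↔
      ∀ n ≤ N,
        BA.IsFlagOn (N - n) (U (N - n)) (fun i => U i) ∧
        BA.IsFlagOn (N - n) (U (N - n)) (fun i => U (N - n) ⊓ U' (n + i)) ∧
        BA.IsFlagOn (N - n) (U (N - n)) (fun i => U (N - n) ⊓ U'' (n + i)) ∧
        BA.Opposite (N - n) (fun i => U i) (fun i => U (N - n) ⊓ U' (n + i)) ∧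
        BA.Opposite (N - n) (fun i => U i) (fun i => U (N - n) ⊓ U'' (n + i)) ∧
        BA.Opposite (N - n) (fun i => U (N - n) ⊓ U' (n + i))
          (fun i => U (N - n) ⊓ U'' (n + i)) := by
  constructor
  · intro h n hn
    have h₁₂ := h.opposite_of_eq_top (hU''.eq_top hV)
    have h₁₃ := h.swap.opposite_of_eq_top (hU'.eq_top hV)
    exact ⟨hU.isFlagOn (by omega), h₁₂.isFlagOn_inf hV hU hU' hn, h₁₃.isFlagOn_inf hV hU hU'' hn,
      h₁₂.inf_right n, h₁₃.inf_right n, h.opposite_inf hn⟩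
  · intro h
    have hUtop := hU.eq_top hV
    have h₁₂ : BA.Opposite N U U' := by simpa [hUtop] using (h 0 N.zero_le).2.2.2.1
    have h₁₃ : BA.Opposite N U U'' := by simpa [hUtop] using (h 0 N.zero_le).2.2.2.2.1
    exact BA.totallyOpposite_of_opposite h₁₂ h₁₃ fun n hn => (h n hn).2.2.2.2.2
end

section
/- Let F be a field, N a natural number, and V an (N+1)-dimensional vector space over F. Let {U_i}_{i=0}^N, {U'_i}_{i=0}^N, {U''_i}_{i=0}^N be totally opposite flags on V. Then for all natural numbers r, s, t with r + s + t ≤ N, the subspace U_{N−r} ∩ U'_{N−s} ∩ U''_{N−t} has dimension N − r − s − t + 1. -/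
/-!
Two dimension counts for `W = U_{N-r} ∩ U'_{N-s} ∩ U''_{N-t}`. From below, each of the two
intersections loses at most `N + 1` dimensions. From above, total opposition says that `W` meets
`U_{s+t-1}` trivially; both lie in `U_{N-r}`, so `dim W + (s + t) ≤ N - r + 1`.
-/

open Module Submodule

theorem Submodule.finrank_add_le_finrank_inf_add_finrank {K V : Type*} [DivisionRing K]
    [AddCommGroup V] [Module K V] [FiniteDimensional K V] (s t : Submodule K V) :
    finrank K s + finrank K t ≤ finrank K ↥(s ⊓ t) + finrank K V := by
  rw [← finrank_sup_add_finrank_inf_eq, add_comm]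
  exact Nat.add_le_add_left (finrank_le _) _

namespace BA

variable {F V : Type*} [Field F] [AddCommGroup V] [Module F V] {N : ℕ}

theorem IsFlag.mono_s10 {U : ℕ → Submodule F V} (hU : IsFlag N U) {i j : ℕ} (hij : i ≤ j)
    (hj : j ≤ N) : U i ≤ U j := by
  induction j, hij using Nat.le_induction with
  | base => exact le_rfl
  | succ j _ ih => exact (ih (by omega)).trans (hU.2 j hj)

theorem IsFlag.finrank_add_le_of_disjoint [FiniteDimensional F V] {U : ℕ → Submodule F V}
    (hU : IsFlag N U) {i j : ℕ} (hji : j ≤ i) (hi : i ≤ N) {W : Submodule F V}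
    (hW : W ≤ U i) (hWj : Disjoint W (U j)) : finrank F W + (j + 1) ≤ i + 1 := by
  have h := finrank_sup_add_finrank_inf_eq W (U j)
  rw [hWj.eq_bot, finrank_bot, add_zero, hU.1 j (hji.trans hi)] at h
  rw [← h, ← hU.1 i hi]
  exact finrank_mono (sup_le hW (hU.mono_s10 hji hi))

theorem TotallyOpposite.inf_eq_bot {U U' U'' : ℕ → Submodule F V}
    (hT : TotallyOpposite N U U' U'') {i j k : ℕ} (hi : i ≤ N) (hj : j ≤ N) (hk : k ≤ N)
    (hijk : i + j + k < 2 * N) : U i ⊓ U' j ⊓ U'' k = ⊥ := by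
  simpa [Nat.sub_sub_self, hi, hj, hk] using
    hT (N - i) (N - j) (N - k) (by omega) (by omega) (by omega) (by omega)

theorem TotallyOpposite.finrank_inf_inf_le [FiniteDimensional F V]
    {U U' U'' : ℕ → Submodule F V} (hU : IsFlag N U) (hT : TotallyOpposite N U U' U'')
    {r s t : ℕ} (hrst : r + s + t ≤ N) :
    finrank F ↥(U (N - r) ⊓ U' (N - s) ⊓ U'' (N - t)) ≤ N - r - s - t + 1 := by
  have hWU : U (N - r) ⊓ U' (N - s) ⊓ U'' (N - t) ≤ U (N - r) := inf_le_left.trans inf_le_left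
  rcases Nat.eq_zero_or_pos (s + t) with hst | hst
  · have := finrank_mono hWU
    rw [hU.1 _ (by omega)] at this
    omega
  have hdisj : Disjoint (U (N - r) ⊓ U' (N - s) ⊓ U'' (N - t)) (U (s + t - 1)) := by
    rw [disjoint_iff, eq_bot_iff, ← hT.inf_eq_bot (i := s + t - 1) (j := N - s) (k := N - t)
      (by omega) (by omega) (by omega) (by omega)]
    simp [inf_le_of_left_le]
  have := hU.finrank_add_le_of_disjoint (by omega) (by omega) hWU hdisj
  omega

theorem le_finrank_inf_inf [FiniteDimensional F V] (hV : finrank F V = N + 1)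
    {U U' U'' : ℕ → Submodule F V} (hU : IsFlag N U) (hU' : IsFlag N U') (hU'' : IsFlag N U'')
    {r s t : ℕ} (hrst : r + s + t ≤ N) :
    N - r - s - t + 1 ≤ finrank F ↥(U (N - r) ⊓ U' (N - s) ⊓ U'' (N - t)) := by
  have hAB := finrank_add_le_finrank_inf_add_finrank (U (N - r)) (U' (N - s))
  have hABC := finrank_add_le_finrank_inf_add_finrank (U (N - r) ⊓ U' (N - s)) (U'' (N - t))
  rw [hU.1 _ (by omega), hU'.1 _ (by omega), hV] at hAB
  rw [hU''.1 _ (by omega), hV] at hABC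
  omega

end BA

/-- If `{U_i}, {U'_i}, {U''_i}` are totally opposite flags on an
`(N+1)`-dimensional vector space `V`, then for `r + s + t ≤ N` the subspace
`U_{N-r} ∩ U'_{N-s} ∩ U''_{N-t}` has dimension `N - r - s - t + 1`. -/
theorem stmt10 {F V : Type*} [Field F] [AddCommGroup V] [Module F V] (N : ℕ)
    (hV : Module.finrank F V = N + 1) (U U' U'' : ℕ → Submodule F V)
    (hU : BA.IsFlag N U) (hU' : BA.IsFlag N U') (hU'' : BA.IsFlag N U'')
    (hT : BA.TotallyOpposite N U U' U'')
    (r s t : ℕ) (hrst : r + s + t ≤ N) :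
    Module.finrank F ↥(U (N - r) ⊓ U' (N - s) ⊓ U'' (N - t)) =
      N - r - s - t + 1 := by
  have : FiniteDimensional F V := .of_finrank_pos (by omega)
  exact le_antisymm (hT.finrank_inf_inf_le hU hrst) (BA.le_finrank_inf_inf hV hU hU' hU'' hrst)
end

section
/- Let F be a field, N a natural number, V an (N+1)-dimensional vector space over F, and B a Billiard Array on V. For 0 ≤ n ≤ N and η ∈ {1,2,3} define U^{(η)}_n to be the sum of the subspaces B_λ over all locations λ ∈ Δ_N whose η-coordinate is at least N − n. Then for each η ∈ {1,2,3} the sequence {U^{(η)}_n}_{n=0}^N is a flag on V, and the three flags {U^{(1)}_n}, {U^{(2)}_n}, {U^{(3)}_n} are totally opposite. -/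
/-- A line in `Δ_N`: the set of locations with a given `η`-coordinate `c`. -/
def BA.IsLine (N : ℕ) (L : Set (Fin 3 → ℕ)) : Prop :=
  ∃ (η : Fin 3) (c : ℕ), c ≤ N ∧ L = {v ∈ BA.Delta N | v η = c}

/-- The black 3-clique attached to `(r,s,t)`. -/
def BA.blackSet (r s t : ℕ) : Set (Fin 3 → ℕ) :=
  {![r + 1, s, t], ![r, s + 1, t], ![r, s, t + 1]}

/-- A Billiard Array on `V`: a function assigning to each location of `Δ_N` a
one-dimensional subspace of `V`, such that the sum over each line is direct and
the sum over each black 3-clique is not direct. -/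
def BA.IsBilliardArray {F V : Type*} [Field F] [AddCommGroup V] [Module F V]
    (N : ℕ) (B : (Fin 3 → ℕ) → Submodule F V) : Prop :=
  (∀ v ∈ BA.Delta N, Module.finrank F (B v) = 1) ∧
  (∀ L : Set (Fin 3 → ℕ), BA.IsLine N L → iSupIndep fun x : L => B x.1) ∧
  (∀ r s t : ℕ, r + s + t + 1 = N → ¬ iSupIndep fun x : BA.blackSet r s t => B x.1)

/-- The sum of `B_λ` over locations `λ ∈ Δ_N` whose `η`-coordinate is at least
`N - n`. -/
def BA.flagOf {F V : Type*} [Field F] [AddCommGroup V] [Module F V]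
    (N : ℕ) (B : (Fin 3 → ℕ) → Submodule F V) (η : Fin 3) (n : ℕ) :
    Submodule F V :=
  ⨆ v ∈ {w | w ∈ BA.Delta N ∧ N - n ≤ w η}, B v

/-!
In a black 3-clique the three lines `B λ` are pairwise distinct, since any two of its locations
lie on a common line of `Δ_N`; as their sum is not direct, they span a plane and each lies in the
sum of the other two. Walking through cliques away from the line `{λ | λ η = N - n}` shows that
`U^{(η)}_n` is spanned by the `B λ` on that line alone; these are independent, so
`dim U^{(η)}_n = n + 1`. The same walk started from the line `λ 2 = 0` gives
`U^{(0)}_{N-r} + U^{(1)}_{N-s} = V` whenever `r + s ≤ N + 1`, so for `r + s + t = N + 1` the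
intersection `U^{(0)}_{N-r} ∩ U^{(1)}_{N-s}` has dimension `t`. Every location on the line
`λ 0 = r` or `λ 1 = s` lies in `U^{(2)}_{N-t}` or in that intersection, hence
`(U^{(0)}_{N-r} ∩ U^{(1)}_{N-s}) + U^{(2)}_{N-t} = V`, and as `dim U^{(2)}_{N-t} = N + 1 - t` the
triple intersection is zero. Larger `r + s + t` follow by monotonicity.
-/

open Module Submodule

section RankOne

variable {F V : Type*} [Field F] [AddCommGroup V] [Module F V]

theorem Submodule.exists_eq_span_singleton_of_finrank_eq_one {P : Submodule F V}
    (hP : finrank F P = 1) : ∃ x ≠ 0, P = F ∙ x := by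
  have : Module.Finite F P := Module.finite_of_finrank_eq_succ hP
  obtain ⟨x, hxP, hx⟩ := exists_mem_ne_zero_of_ne_bot (p := P) (by rintro rfl; simp at hP)
  exact ⟨x, hx, (eq_of_le_of_finrank_eq ((span_singleton_le_iff_mem x P).mpr hxP)
    (by rw [finrank_span_singleton hx, hP])).symm⟩

theorem finrank_iSup_eq_natCard_of_iSupIndep {ι : Type*} [Finite ι] {p : ι → Submodule F V}
    (hp : iSupIndep p) (h1 : ∀ i, finrank F (p i) = 1) :
    finrank F ↥(⨆ i, p i) = Nat.card ι := by
  choose x hx0 hx using fun i => exists_eq_span_singleton_of_finrank_eq_one (h1 i)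
  have hli : LinearIndependent F x :=
    hp.linearIndependent _ (fun i => hx i ▸ mem_span_singleton_self _) hx0
  have := Fintype.ofFinite ι
  rw [iSup_congr hx, ← span_range_eq_iSup, finrank_span_eq_card hli, Nat.card_eq_fintype_card]

variable [FiniteDimensional F V]

theorem Submodule.disjoint_of_finrank_add_le_finrank_sup {P Q : Submodule F V}
    (h : finrank F P + finrank F Q ≤ finrank F ↥(P ⊔ Q)) : Disjoint P Q := by
  have := finrank_sup_add_finrank_inf_eq P Q
  rw [disjoint_iff, ← finrank_eq_zero]
  omega

theorem Submodule.finrank_inf_add_finrank_eq_of_sup_eq_top {P Q : Submodule F V}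
    (h : P ⊔ Q = ⊤) : finrank F ↥(P ⊓ Q) + finrank F V = finrank F P + finrank F Q := by
  rw [← finrank_sup_add_finrank_inf_eq, h, finrank_top, add_comm]

theorem finrank_iSup_le_two_of_not_iSupIndep {g : Fin 3 → Submodule F V}
    (hg : ∀ i, finrank F (g i) = 1) (h : ¬ iSupIndep g) : finrank F ↥(⨆ i, g i) ≤ 2 := by
  contrapose! h
  have key : ∀ a b c, g a ⊔ (g b ⊔ g c) = ⨆ i, g i → Disjoint (g a) (g b ⊔ g c) :=
    fun a b c habc => disjoint_of_finrank_add_le_finrank_sup <| by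
      have := finrank_add_le_finrank_add_finrank (g b) (g c)
      rw [habc, hg a]; rw [hg b, hg c] at this; omega
  rw [iSupIndep_fin_three]
  refine ⟨key 0 1 2 ?_, key 1 2 0 ?_, key 2 0 1 ?_⟩ <;> simp only [iSup_fin_three] <;> ac_rfl

theorem le_sup_of_not_iSupIndep {g : Fin 3 → Submodule F V}
    (hg : ∀ i, finrank F (g i) = 1) (h : ¬ iSupIndep g) {j k : Fin 3}
    (hjk : Disjoint (g j) (g k)) (i : Fin 3) : g i ≤ g j ⊔ g k := by
  have hjk2 : finrank F ↥(g j ⊔ g k) = 2 := by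
    have := finrank_sup_add_finrank_inf_eq (g j) (g k)
    rw [hjk.eq_bot, finrank_bot, hg, hg] at this; omega
  have : g j ⊔ g k = ⨆ l, g l := eq_of_le_of_finrank_le (sup_le (le_iSup g j) (le_iSup g k))
    (hjk2 ▸ finrank_iSup_le_two_of_not_iSupIndep hg h)
  exact this ▸ le_iSup g i

end RankOne

theorem Fin.sum_univ_three_rotate {M : Type*} [AddCommMonoid M] (f : Fin 3 → M) (η : Fin 3) :
    ∑ i, f i = f η + f (η + 1) + f (η + 2) := by
  fin_cases η <;> simp [Fin.sum_univ_three] <;> abel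

namespace BA

variable {F V : Type*} [Field F] [AddCommGroup V] [Module F V] {N : ℕ}
  {B : (Fin 3 → ℕ) → Submodule F V}

def line (N : ℕ) (η : Fin 3) (c : ℕ) : Set (Fin 3 → ℕ) := {v ∈ Delta N | v η = c}

theorem isLine_line {η : Fin 3} {c : ℕ} (hc : c ≤ N) : IsLine N (line N η c) := ⟨η, c, hc, rfl⟩

theorem mem_Delta_iff {v : Fin 3 → ℕ} : v ∈ Delta N ↔ ∑ i, v i = N := by
  simp [Delta, Fin.sum_univ_three]

theorem apply_le_of_mem_Delta {v : Fin 3 → ℕ} (hv : v ∈ Delta N) (η : Fin 3) : v η ≤ N :=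
  mem_Delta_iff.mp hv ▸ Finset.single_le_sum (fun _ _ => Nat.zero_le _) (Finset.mem_univ η)

theorem natCard_line {η : Fin 3} {c : ℕ} (hc : c ≤ N) : Nat.card (line N η c) = N - c + 1 := by
  have hsum : ∀ v ∈ line N η c, v (η + 1) + v (η + 2) = N - c := fun v hv => by
    have := Fin.sum_univ_three_rotate v η
    rw [mem_Delta_iff.mp hv.1, hv.2] at this
    omega
  have h1 : η + 1 ≠ η := (by decide : ∀ η : Fin 3, η + 1 ≠ η) η
  have h2 : η + 2 ≠ η := (by decide : ∀ η : Fin 3, η + 2 ≠ η) η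
  have h21 : η + 2 ≠ η + 1 := (by decide : ∀ η : Fin 3, η + 2 ≠ η + 1) η
  rw [← Nat.card_fin (N - c + 1)]
  refine Nat.card_eq_of_bijective (fun v => ⟨v.1 (η + 1), by have := hsum v v.2; omega⟩) ⟨?_, ?_⟩
  · rintro ⟨u, hu⟩ ⟨v, hv⟩ huv
    have huv : u (η + 1) = v (η + 1) := Fin.mk.inj huv
    have hu2 := hsum u hu
    have hv2 := hsum v hv
    refine Subtype.ext (funext fun l => show u l = v l from ?_)
    obtain rfl | rfl | rfl : l = η ∨ l = η + 1 ∨ l = η + 2 :=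
      (by decide : ∀ η l : Fin 3, l = η ∨ l = η + 1 ∨ l = η + 2) η l
    exacts [hu.2.trans hv.2.symm, huv, by omega]
  · intro i
    let v : Fin 3 → ℕ := fun l => if l = η then c else if l = η + 1 then i else N - c - i
    have hv : v ∈ line N η c := by
      refine ⟨?_, if_pos rfl⟩
      rw [mem_Delta_iff, Fin.sum_univ_three_rotate _ η]
      simp only [v, h1, h2, h21, if_true, if_false]
      omega
    exact ⟨⟨v, hv⟩, by simp [v, h1]⟩

theorem le_flagOf {η : Fin 3} {n : ℕ} {v : Fin 3 → ℕ} (hv : v ∈ Delta N) (h : N - n ≤ v η) :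
    B v ≤ flagOf N B η n :=
  le_biSup B (show v ∈ {w | w ∈ Delta N ∧ N - n ≤ w η} from ⟨hv, h⟩)

theorem flagOf_mono (η : Fin 3) : Monotone (flagOf N B η) :=
  fun _ _ hnm => biSup_mono fun _ hv => ⟨hv.1, le_trans (by omega) hv.2⟩

theorem blackSet_eq_range (w : Fin 3 → ℕ) :
    blackSet (w 0) (w 1) (w 2) = Set.range fun i => w + Pi.single i 1 := by
  ext v
  simp [blackSet, Fin.exists_fin_succ, funext_iff, Fin.forall_fin_succ]
  omega

namespace IsBilliardArray

theorem disjoint_of_apply_eq (hB : IsBilliardArray N B) {u v : Fin 3 → ℕ} (hu : u ∈ Delta N)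
    (hv : v ∈ Delta N) (huv : u ≠ v) {η : Fin 3} (h : u η = v η) : Disjoint (B u) (B v) :=
  (hB.2.1 _ (isLine_line (apply_le_of_mem_Delta hu η))).pairwiseDisjoint
    (i := ⟨u, hu, rfl⟩) (j := ⟨v, hv, h.symm⟩) fun h' => huv (congrArg Subtype.val h')

theorem finrank_iSup_line (hB : IsBilliardArray N B) (η : Fin 3) {c : ℕ} (hc : c ≤ N) :
    finrank F ↥(⨆ v ∈ line N η c, B v) = N - c + 1 := by
  have : Finite (line N η c) := Nat.finite_of_card_ne_zero (by rw [natCard_line hc]; omega)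
  rw [iSup_subtype', finrank_iSup_eq_natCard_of_iSupIndep (hB.2.1 _ (isLine_line hc))
    (fun v => hB.1 v v.2.1), natCard_line hc]

variable [FiniteDimensional F V]

theorem le_sup_of_clique (hB : IsBilliardArray N B) {w : Fin 3 → ℕ} (hw : ∑ i, w i + 1 = N)
    {j k : Fin 3} (hjk : j ≠ k) (i : Fin 3) :
    B (w + Pi.single i 1) ≤ B (w + Pi.single j 1) ⊔ B (w + Pi.single k 1) := by
  have hmem : ∀ l, w + Pi.single l 1 ∈ Delta N := fun l =>
    mem_Delta_iff.mpr (by simpa [Finset.sum_add_distrib] using hw)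
  have hdep : ¬ iSupIndep fun l => B (w + Pi.single l 1) := fun h =>
    hB.2.2 (w 0) (w 1) (w 2) (by simpa [Fin.sum_univ_three] using hw) <| by
      rw [blackSet_eq_range]
      exact iSupIndep.comp' (t := fun x : Set.range (fun l => w + Pi.single l 1) => B x) h
        Set.rangeFactorization_surjective
  obtain ⟨l, hlj, hlk⟩ : ∃ l, l ≠ j ∧ l ≠ k :=
    (by decide : ∀ j k : Fin 3, ∃ l, l ≠ j ∧ l ≠ k) j k
  refine le_sup_of_not_iSupIndep (fun l => hB.1 _ (hmem l)) hdep ?_ i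
  refine hB.disjoint_of_apply_eq (hmem j) (hmem k) (fun h => ?_) (η := l) (by simp [hlj, hlk])
  simpa [hjk] using congrFun h j

theorem le_of_forall_line_le (hB : IsBilliardArray N B) {X : Submodule F V} {η : Fin 3} {c : ℕ}
    (hX : ∀ v ∈ line N η c, B v ≤ X) {v : Fin 3 → ℕ} (hv : v ∈ Delta N) (hcv : c ≤ v η) :
    B v ≤ X := by
  obtain ⟨m, hm⟩ : ∃ m, v η = c + m := ⟨v η - c, by omega⟩
  induction m generalizing v with
  | zero => exact hX v ⟨hv, hm⟩
  | succ m ih =>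
    obtain ⟨w, rfl⟩ : ∃ w : Fin 3 → ℕ, v = w + Pi.single η 1 := by
      refine ⟨v - Pi.single η 1, (tsub_add_cancel_of_le fun i => ?_).symm⟩
      by_cases hi : i = η <;> simp [hi]; omega
    have hw : ∑ i, w i + 1 = N := by
      simpa [Finset.sum_add_distrib] using mem_Delta_iff.mp hv
    obtain ⟨j, k, hj, hk, hjk⟩ : ∃ j k : Fin 3, j ≠ η ∧ k ≠ η ∧ j ≠ k :=
      (by decide : ∀ η : Fin 3, ∃ j k : Fin 3, j ≠ η ∧ k ≠ η ∧ j ≠ k) η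
    have hwη : w η = c + m := by simp at hm; omega
    have hstep : ∀ l ≠ η, B (w + Pi.single l 1) ≤ X := fun l hl =>
      ih (mem_Delta_iff.mpr (by simpa [Finset.sum_add_distrib] using hw))
        (by simp [hl.symm, hwη]) (by simp [hl.symm, hwη])
    exact (hB.le_sup_of_clique hw hjk η).trans (sup_le (hstep j hj) (hstep k hk))

theorem flagOf_eq_iSup_line (hB : IsBilliardArray N B) (η : Fin 3) (n : ℕ) :
    flagOf N B η n = ⨆ v ∈ line N η (N - n), B v :=
  le_antisymm
    (iSup₂_le fun _ hv => hB.le_of_forall_line_le (fun _ hu => le_biSup B hu) hv.1 hv.2)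
    (biSup_mono fun _ hv => ⟨hv.1, hv.2.ge⟩)

theorem flagOf_le_of_forall_line_le (hB : IsBilliardArray N B) {X : Submodule F V} {η : Fin 3}
    {n : ℕ} (hX : ∀ v ∈ line N η (N - n), B v ≤ X) : flagOf N B η n ≤ X :=
  (hB.flagOf_eq_iSup_line η n).trans_le (iSup₂_le hX)

theorem finrank_flagOf (hB : IsBilliardArray N B) (η : Fin 3) {n : ℕ} (hn : n ≤ N) :
    finrank F (flagOf N B η n) = n + 1 := by
  rw [hB.flagOf_eq_iSup_line, hB.finrank_iSup_line η (Nat.sub_le N n)]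
  omega

theorem isFlag_flagOf (hB : IsBilliardArray N B) (η : Fin 3) : IsFlag N (flagOf N B η) :=
  ⟨fun _ hi => hB.finrank_flagOf η hi, fun i _ => flagOf_mono η i.le_succ⟩

theorem flagOf_self_eq_top (hB : IsBilliardArray N B) (hV : finrank F V = N + 1) (η : Fin 3) :
    flagOf N B η N = ⊤ :=
  eq_top_of_finrank_eq (by rw [hB.finrank_flagOf η le_rfl, hV])

theorem flagOf_zero_sup_flagOf_one_eq_top (hB : IsBilliardArray N B) (hV : finrank F V = N + 1)
    {n m : ℕ} (h : N ≤ n + m + 1) : flagOf N B 0 n ⊔ flagOf N B 1 m = ⊤ := by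
  rw [eq_top_iff, ← hB.flagOf_self_eq_top hV 2]
  refine hB.flagOf_le_of_forall_line_le fun v ⟨hv, hv2⟩ => ?_
  have hsum : v 0 + v 1 + v 2 = N := hv
  rcases le_or_gt (N - n) (v 0) with h0 | h0
  · exact le_sup_of_le_left (le_flagOf hv h0)
  · exact le_sup_of_le_right (le_flagOf hv (by omega))

theorem flagOf_inf_flagOf_inf_flagOf_eq_bot (hB : IsBilliardArray N B) (hV : finrank F V = N + 1)
    {r s t : ℕ} (hr : r ≤ N) (hs : s ≤ N) (ht : t ≤ N) (hrst : r + s + t = N + 1) :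
    flagOf N B 0 (N - r) ⊓ flagOf N B 1 (N - s) ⊓ flagOf N B 2 (N - t) = ⊥ := by
  set U₁ := flagOf N B 0 (N - r)
  set U₂ := flagOf N B 1 (N - s)
  set U₃ := flagOf N B 2 (N - t)
  have h₁₂ : U₁ ⊔ U₂ = ⊤ := hB.flagOf_zero_sup_flagOf_one_eq_top hV (by omega)
  have hle : ∀ v ∈ Delta N, v 0 = r ∨ v 1 = s → B v ≤ U₁ ⊓ U₂ ⊔ U₃ := by
    intro v hv hrs
    have hsum : v 0 + v 1 + v 2 = N := hv
    by_cases h2 : t ≤ v 2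
    · exact le_sup_of_le_right (le_flagOf hv (by omega))
    · exact le_sup_of_le_left (le_inf (le_flagOf hv (by omega)) (le_flagOf hv (by omega)))
  have h₁₂₃ : U₁ ⊓ U₂ ⊔ U₃ = ⊤ := eq_top_iff.mpr <| h₁₂ ▸ sup_le
    (hB.flagOf_le_of_forall_line_le fun v hv => hle v hv.1 (.inl (by have := hv.2; omega)))
    (hB.flagOf_le_of_forall_line_le fun v hv => hle v hv.1 (.inr (by have := hv.2; omega)))
  have d₁₂ := finrank_inf_add_finrank_eq_of_sup_eq_top h₁₂
  have d₁₂₃ := finrank_inf_add_finrank_eq_of_sup_eq_top h₁₂₃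
  rw [hB.finrank_flagOf 0 (Nat.sub_le N r), hB.finrank_flagOf 1 (Nat.sub_le N s), hV] at d₁₂
  rw [hB.finrank_flagOf 2 (Nat.sub_le N t), hV] at d₁₂₃
  exact finrank_eq_zero.mp (by omega)

theorem totallyOpposite_flagOf (hB : IsBilliardArray N B) (hV : finrank F V = N + 1) :
    TotallyOpposite N (flagOf N B 0) (flagOf N B 1) (flagOf N B 2) := by
  intro r s t hr hs ht hN
  obtain ⟨s', hs', t', ht', hsum⟩ : ∃ s' ≤ s, ∃ t' ≤ t, r + s' + t' = N + 1 :=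
    ⟨min s (N + 1 - r), min_le_left _ _, N + 1 - r - min s (N + 1 - r), by omega, by omega⟩
  refine eq_bot_iff.mpr (le_trans ?_ (hB.flagOf_inf_flagOf_inf_flagOf_eq_bot hV hr
    (hs'.trans hs) (ht'.trans ht) hsum).le)
  gcongr <;> apply flagOf_mono <;> omega

end IsBilliardArray

end BA

/-- For a Billiard Array `B` on an `(N+1)`-dimensional vector space `V`, the
three sequences `{U^{(η)}_n}_{n=0}^N` (where `U^{(η)}_n` is the sum of the
`B_λ` with `η`-coordinate at least `N-n`) are flags on `V`, and these three
flags are totally opposite. -/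
theorem stmt12 {F V : Type*} [Field F] [AddCommGroup V] [Module F V] (N : ℕ)
    (hV : Module.finrank F V = N + 1) (B : (Fin 3 → ℕ) → Submodule F V)
    (hB : BA.IsBilliardArray N B) :
    (∀ η : Fin 3, BA.IsFlag N (BA.flagOf N B η)) ∧
      BA.TotallyOpposite N (BA.flagOf N B 0) (BA.flagOf N B 1)
        (BA.flagOf N B 2) := by
  have : FiniteDimensional F V := Module.finite_of_finrank_eq_succ hV
  exact ⟨hB.isFlag_flagOf, hB.totallyOpposite_flagOf hV⟩
end
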